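/- Let (W,S) be a right-angled Coxeter system such that W is infinite. If (W,S) is irreducible, then there exists s₀ ∈ S such that W^{{s₀}} = {w ∈ W : S(w) = {s₀}} is quasi-dense in W with respect to the word metric. -/

import Mathlib

/-!
Two right descents `i ≠ j` of an element `v` of a right-angled Coxeter group commute. Otherwise
`m(i,j) = ∞`; write `v = x u` with `x` of minimal length in `v W_{i,j}`. By the cocycle property
of Björner–Brenti's sign representation, the right descents of `v` in `{i, j}` are right descents
of `u`. But `u` is the product of an alternating word, and alternating words are reduced because
`W` maps onto the infinite dihedral group; so `u` has at most one right descent in `{i, j}`.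

Hence, if `x` has right descent `u` and `m(u,w) = ∞`, then `x s_w` has right descent `w`, and its
other right descents are right descents of `x` commuting with `s_w`. Irreducibility makes the
Coxeter graph connected, so it has a closed walk at `s₀` through every vertex. Multiplying an
element with right descent `s₀` by the vertices of this walk one at a time leaves `s₀` as its
only right descent and moves it a bounded distance.
-/

namespace CoxeterMatrix

variable {B : Type*}

def IsRightAngled (M : CoxeterMatrix B) : Prop := ∀ s t, s ≠ t → M s t = 2 ∨ M s t = 0

def IsIrreducible (M : CoxeterMatrix B) : Prop :=
  ¬ ∃ S₁ S₂ : Set B, S₁ ∪ S₂ = Set.univ ∧ Disjoint S₁ S₂ ∧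
    S₁.Nonempty ∧ S₂.Nonempty ∧ ∀ s ∈ S₁, ∀ t ∈ S₂, M s t = 2

def coxeterGraph (M : CoxeterMatrix B) : SimpleGraph B where
  Adj s t := s ≠ t ∧ M s t ≠ 2
  symm := ⟨fun _ _ h => ⟨h.1.symm, by rw [M.symmetric]; exact h.2⟩⟩
  loopless := ⟨fun _ h => h.1 rfl⟩

@[simp]
theorem coxeterGraph_adj {M : CoxeterMatrix B} {s t : B} :
    M.coxeterGraph.Adj s t ↔ s ≠ t ∧ M s t ≠ 2 :=
  Iff.rfl

theorem IsRightAngled.isLiftable {M : CoxeterMatrix B} (hM : M.IsRightAngled) {G : Type*}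
    [Monoid G] {f : B → G} (hsq : ∀ i, f i * f i = 1)
    (hcomm : ∀ i j, M i j = 2 → Commute (f i) (f j)) : M.IsLiftable f := by
  intro i j
  rcases eq_or_ne i j with rfl | hij
  · simpa using hsq i
  rcases hM i j hij with h | h
  · rw [h, pow_two, mul_assoc, ← mul_assoc (f j), ← (hcomm i j h).eq, mul_assoc, hsq, mul_one,
      hsq]
  · rw [h, pow_zero]

theorem IsRightAngled.eq_zero_of_adj {M : CoxeterMatrix B} (hM : M.IsRightAngled) {s t : B}
    (h : M.coxeterGraph.Adj s t) : M s t = 0 :=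
  (hM s t (coxeterGraph_adj.mp h).1).resolve_left (coxeterGraph_adj.mp h).2

theorem IsIrreducible.preconnected_coxeterGraph {M : CoxeterMatrix B} (hM : M.IsIrreducible) :
    M.coxeterGraph.Preconnected := by
  intro a b
  by_contra hab
  refine hM ⟨{x | M.coxeterGraph.Reachable a x}, {x | M.coxeterGraph.Reachable a x}ᶜ,
    Set.union_compl_self _, disjoint_compl_right, ⟨a, .refl a⟩, ⟨b, hab⟩, fun s hs t ht => ?_⟩
  by_contra hst
  have hne : s ≠ t := fun h => ht (h ▸ hs)
  exact ht (hs.trans (coxeterGraph_adj.mpr ⟨hne, hst⟩).reachable)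

end CoxeterMatrix

theorem SimpleGraph.Preconnected.exists_walk_forall_mem_support {V : Type*} [Finite V]
    {G : SimpleGraph V} (hG : G.Preconnected) (u : V) :
    ∃ p : G.Walk u u, ∀ v, v ∈ p.support := by
  suffices ∀ l : List V, ∃ p : G.Walk u u, ∀ v ∈ l, v ∈ p.support by
    obtain ⟨l, -, hl⟩ := Finite.exists_univ_list V
    obtain ⟨p, hp⟩ := this l
    exact ⟨p, fun v => hp v (hl v)⟩
  intro l
  induction l with
  | nil => exact ⟨.nil, by simp⟩
  | cons v l ih =>
    obtain ⟨p, hp⟩ := ih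
    obtain ⟨q⟩ := hG u v
    refine ⟨p.append (q.append q.reverse), fun w hw => ?_⟩
    rcases List.mem_cons.mp hw with rfl | hw
    · simp [SimpleGraph.Walk.mem_support_append_iff]
    · simp [SimpleGraph.Walk.mem_support_append_iff, hp w hw]

namespace CoxeterSystem

variable {B W : Type*} [Group W] {M : CoxeterMatrix B} (cs : CoxeterSystem M W)

open scoped Classical

noncomputable section

local prefix:100 "σ" => cs.simple
local prefix:100 "π" => cs.wordProd
local prefix:100 "ℓ" => cs.length

theorem simple_mul_simple_comm_of_eq_two {i j : B} (h : M i j = 2) : σ i * σ j = σ j * σ i := by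
  have := cs.simple_mul_simple_pow i j
  rwa [h, pow_two, mul_eq_one_iff_eq_inv, mul_inv_rev, cs.inv_simple, cs.inv_simple] at this

theorem simple_mul_mul_simple_eq_iff {i : B} {x y : W} :
    σ i * x * σ i = y ↔ x = σ i * y * σ i := by
  constructor <;> rintro rfl <;>
    simp [mul_assoc, cs.simple_mul_simple_cancel_left, cs.simple_mul_simple_cancel_right]

theorem simple_injective (hM : M.IsRightAngled) : Function.Injective cs.simple := by
  intro a b hab
  by_contra hne
  let ε := cs.lift ⟨fun k => if k = a then (-1 : ℤˣ) else 1,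
    hM.isLiftable (fun k => by split_ifs <;> decide) (fun _ _ _ => Commute.all _ _)⟩
  have := congrArg ε hab
  simp only [ε, lift_apply_simple, if_neg (Ne.symm hne)] at this
  exact absurd this (by decide)

/-- Björner–Brenti's `η_i`, acting on pairs (reflection, sign). -/
def signedConj (i : B) (p : W × ℤˣ) : W × ℤˣ :=
  (σ i * p.1 * σ i, if p.1 = σ i then -p.2 else p.2)

theorem signedConj_involutive (i : B) : Function.Involutive (cs.signedConj i) := by
  rintro ⟨x, e⟩
  have hconj : σ i * (σ i * x * σ i) * σ i = x := (cs.simple_mul_mul_simple_eq_iff.mp rfl).symm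
  simp only [signedConj, hconj, cs.simple_mul_mul_simple_eq_iff, cs.simple_mul_simple_self,
    one_mul, Prod.mk.injEq, true_and]
  split_ifs <;> simp

theorem signedConj_comm {i j : B} (h : M i j = 2) :
    cs.signedConj i ∘ cs.signedConj j = cs.signedConj j ∘ cs.signedConj i := by
  funext ⟨x, e⟩
  have hij := cs.simple_mul_simple_comm_of_eq_two h
  have hconj : ∀ {a b : B}, σ a * σ b = σ b * σ a → (σ b * x * σ b = σ a ↔ x = σ a) := by
    intro a b hab
    rw [simple_mul_mul_simple_eq_iff, ← hab, cs.simple_mul_simple_cancel_right]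
  simp only [signedConj, Function.comp_apply, Prod.mk.injEq, hconj hij, hconj hij.symm]
  refine ⟨by simp only [← mul_assoc, hij]; simp only [mul_assoc, hij], ?_⟩
  split_ifs <;> simp_all

def signRep (hM : M.IsRightAngled) : W →* Equiv.Perm (W × ℤˣ) :=
  cs.lift ⟨fun i => (cs.signedConj_involutive i).toPerm, hM.isLiftable
    (fun i => Equiv.ext fun p => cs.signedConj_involutive i p)
    (fun _ _ h => Equiv.ext fun p => congrFun (cs.signedConj_comm h) p)⟩

variable (hM : M.IsRightAngled)

theorem signRep_wordProd (ω : List B) (x : W) (e : ℤˣ) :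
    cs.signRep hM (π ω) (x, e) =
      (π ω * x * (π ω)⁻¹, e * (-1) ^ (cs.rightInvSeq ω).count x) := by
  induction ω generalizing x e with
  | nil => simp [rightInvSeq]
  | cons i ω ih =>
    rw [cs.wordProd_cons, map_mul, Equiv.Perm.mul_apply, ih, signRep, lift_apply_simple]
    simp only [Function.Involutive.coe_toPerm, signedConj, rightInvSeq, List.count_cons,
      beq_iff_eq, mul_inv_rev, cs.inv_simple, ← mul_assoc, Prod.mk.injEq, true_and]
    have hcond : π ω * x * (π ω)⁻¹ = σ i ↔ (π ω)⁻¹ * σ i * π ω = x := by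
      constructor
      · rintro h; rw [← h]; group
      · rintro rfl; group
    rw [if_congr hcond rfl rfl]
    split_ifs <;> simp [pow_succ]

def inversionSign (w x : W) : ℤˣ := (cs.signRep hM w (x, 1)).2

theorem inversionSign_wordProd (ω : List B) (x : W) :
    cs.inversionSign hM (π ω) x = (-1) ^ (cs.rightInvSeq ω).count x := by
  rw [inversionSign, signRep_wordProd, one_mul]

theorem signRep_apply (w x : W) (e : ℤˣ) :
    cs.signRep hM w (x, e) = (w * x * w⁻¹, e * cs.inversionSign hM w x) := by
  obtain ⟨ω, rfl⟩ := cs.wordProd_surjective w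
  rw [signRep_wordProd, inversionSign_wordProd]

theorem inversionSign_mul (u v x : W) :
    cs.inversionSign hM (u * v) x =
      cs.inversionSign hM v x * cs.inversionSign hM u (v * x * v⁻¹) := by
  rw [inversionSign, map_mul, Equiv.Perm.mul_apply, signRep_apply, signRep_apply, one_mul]

theorem inversionSign_simple (i : B) (x : W) :
    cs.inversionSign hM (σ i) x = if x = σ i then -1 else 1 := by
  simp [inversionSign, signRep, signedConj]

theorem length_mul_lt_of_inversionSign_eq_neg_one {w t : W}
    (h : cs.inversionSign hM w t = -1) : ℓ (w * t) < ℓ w := by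
  obtain ⟨ω, hω, rfl⟩ := cs.exists_isReduced w
  rw [inversionSign_wordProd] at h
  have hmem : t ∈ cs.rightInvSeq ω := by
    by_contra hnot
    rw [List.count_eq_zero_of_not_mem hnot, pow_zero] at h
    exact absurd h (by decide)
  exact (cs.isRightInversion_of_mem_rightInvSeq hω hmem).2

theorem isRightDescent_iff_inversionSign {w : W} {i : B} :
    cs.IsRightDescent w i ↔ cs.inversionSign hM w (σ i) = -1 := by
  refine ⟨fun hi => (Int.units_eq_one_or _).resolve_left fun h => ?_,
    cs.length_mul_lt_of_inversionSign_eq_neg_one hM⟩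
  have hflip : cs.inversionSign hM (w * σ i) (σ i) = -1 := by
    rw [inversionSign_mul, inversionSign_simple, if_pos rfl, cs.inv_simple,
      cs.simple_mul_simple_self, one_mul, h, mul_one]
  have := cs.length_mul_lt_of_inversionSign_eq_neg_one hM hflip
  rw [cs.simple_mul_simple_cancel_right] at this
  exact absurd hi (by unfold IsRightDescent; omega)

include hM in
theorem isRightDescent_mul_simple_iff {w : W} {i c : B} (hic : i ≠ c) (h : M i c = 2) :
    cs.IsRightDescent (w * σ c) i ↔ cs.IsRightDescent w i := by
  have hconj : σ c * σ i * (σ c)⁻¹ = σ i := by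
    rw [cs.inv_simple, ← cs.simple_mul_simple_comm_of_eq_two h, cs.simple_mul_simple_cancel_right]
  rw [cs.isRightDescent_iff_inversionSign hM, cs.isRightDescent_iff_inversionSign hM,
    inversionSign_mul, inversionSign_simple, if_neg ((cs.simple_injective hM).ne hic), one_mul,
    hconj]

def IsMinimalCosetRep (J : Set B) (x : W) : Prop :=
  ∀ χ : List B, (∀ c ∈ χ, c ∈ J) → ℓ x ≤ ℓ (x * π χ)

include hM in
theorem isRightDescent_of_isMinimalCosetRep {J : Set B} {x : W}
    (hx : cs.IsMinimalCosetRep J x) {χ : List B} (hχ : ∀ c ∈ χ, c ∈ J) {c : B} (hc : c ∈ J)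
    (h : cs.IsRightDescent (x * π χ) c) : cs.IsRightDescent (π χ) c := by
  set t := π χ * σ c * (π χ)⁻¹
  have ht : cs.inversionSign hM x t = 1 := by
    refine (Int.units_eq_one_or _).resolve_right fun hneg => ?_
    have hword : x * t = x * π (χ ++ [c] ++ χ.reverse) := by
      simp only [t, wordProd_append, wordProd_singleton, wordProd_reverse, mul_assoc]
    have hletters : ∀ d ∈ χ ++ [c] ++ χ.reverse, d ∈ J := by
      simp only [List.mem_append, List.mem_singleton, List.mem_reverse]
      rintro d ((hd | rfl) | hd)
      exacts [hχ d hd, hc, hχ d hd]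
    have hle := hx _ hletters
    have hlt := cs.length_mul_lt_of_inversionSign_eq_neg_one hM hneg
    rw [hword] at hlt
    omega
  rw [cs.isRightDescent_iff_inversionSign hM] at h ⊢
  rwa [inversionSign_mul, ht, mul_one] at h

/-- `σ i` and `σ j` act on `ℤ` as the reflections in `-1/2` and `1/2`, the other generators
trivially; on the image the word length of `g` is `|g 0|`. -/
def dihedralRep {i j : B} (hij : M i j = 0) : W →* Equiv.Perm ℤ :=
  cs.lift ⟨fun k => if k = i then Equiv.subLeft (-1) else if k = j then Equiv.subLeft 1 else 1,
    hM.isLiftable (fun k => by split_ifs <;> ext <;> simp) (fun a b hab => by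
      have hji : M j i = 0 := by rw [M.symmetric, hij]
      split_ifs <;> subst_vars <;> simp_all)⟩

theorem dihedralRep_simple {i j : B} (hij : M i j = 0) (k : B) :
    cs.dihedralRep hM hij (σ k) =
      if k = i then Equiv.subLeft (-1) else if k = j then Equiv.subLeft 1 else 1 :=
  cs.lift_apply_simple _ k

theorem natAbs_dihedralRep_apply_zero_le_length {i j : B} (hij : M i j = 0) (w : W) :
    (cs.dihedralRep hM hij w 0).natAbs ≤ ℓ w := by
  obtain ⟨ω, hω, rfl⟩ := cs.exists_isReduced w
  rw [hω.eq]
  clear hω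
  induction ω with
  | nil => simp
  | cons k ω ih =>
    rw [wordProd_cons, map_mul, Equiv.Perm.mul_apply, dihedralRep_simple, List.length_cons]
    split_ifs <;> simp only [Equiv.subLeft_apply, Equiv.Perm.one_apply] <;> omega

theorem dihedralRep_alternatingWord_apply_zero {i j : B} (hij : M i j = 0) (m : ℕ) :
    cs.dihedralRep hM hij (π (alternatingWord i j m)) 0 = if Even m then -(m : ℤ) else m := by
  have hji : j ≠ i := fun h => by simp [h] at hij
  induction m with
  | zero => simp [alternatingWord]
  | succ m ih =>
    rw [alternatingWord_succ', wordProd_cons, map_mul, Equiv.Perm.mul_apply, ih,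
      dihedralRep_simple]
    by_cases hm : Even m <;> simp [hm, hji, Nat.even_add_one] <;> omega

include hM in
theorem isReduced_alternatingWord_of_eq_zero {i j : B} (hij : M i j = 0) (m : ℕ) :
    cs.IsReduced (alternatingWord i j m) := by
  have := cs.natAbs_dihedralRep_apply_zero_le_length hM hij (π (alternatingWord i j m))
  rw [dihedralRep_alternatingWord_apply_zero] at this
  refine le_antisymm (cs.length_wordProd_le _) ?_
  rw [length_alternatingWord]
  split_ifs at this <;> simpa using this

theorem exists_wordProd_alternatingWord_eq {i j : B} {χ : List B}
    (hχ : ∀ c ∈ χ, c ∈ ({i, j} : Set B)) :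
    ∃ a b m, (a = i ∧ b = j ∨ a = j ∧ b = i) ∧ π χ = π (alternatingWord a b m) := by
  induction χ using List.reverseRecOn with
  | nil => exact ⟨i, j, 0, Or.inl ⟨rfl, rfl⟩, rfl⟩
  | append_singleton χ c ih =>
    obtain ⟨a, b, m, hab, hπ⟩ := ih fun d hd => hχ d (List.mem_append_left _ hd)
    have hc : c = a ∨ c = b := by
      have := hχ c (by simp)
      simp only [Set.mem_insert_iff, Set.mem_singleton_iff] at this
      rcases hab with ⟨rfl, rfl⟩ | ⟨rfl, rfl⟩ <;> tauto
    have hba : b = i ∧ a = j ∨ b = j ∧ a = i := by tauto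
    rw [wordProd_append, wordProd_singleton, hπ]
    rcases hc with rfl | rfl
    · exact ⟨b, c, m + 1, hba, by rw [alternatingWord_succ, wordProd_concat]⟩
    · cases m with
      | zero => exact ⟨a, c, 1, hab, by simp [alternatingWord]⟩
      | succ m =>
        exact ⟨c, a, m, hba, by
          rw [alternatingWord_succ, wordProd_concat, simple_mul_simple_cancel_right]⟩

include hM in
theorem not_isRightDescent_wordProd_alternatingWord {a b : B} (hab : M a b = 0) (m : ℕ) :
    ¬ cs.IsRightDescent (π (alternatingWord a b m)) a := by
  have hba : M b a = 0 := by rw [M.symmetric, hab]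
  rw [IsRightDescent, ← wordProd_concat, ← alternatingWord_succ,
    (cs.isReduced_alternatingWord_of_eq_zero hM hba _).eq,
    (cs.isReduced_alternatingWord_of_eq_zero hM hab _).eq]
  simp

include hM in
theorem not_isRightDescent_of_eq_zero {i j : B} (hij : M i j = 0) {v : W}
    (hi : cs.IsRightDescent v i) : ¬ cs.IsRightDescent v j := by
  intro hj
  let J : Set B := {i, j}
  obtain ⟨x, ⟨χ, hχ, hxχ⟩, hmin⟩ := (measure cs.length).wf.has_min
    {x : W | ∃ χ : List B, (∀ c ∈ χ, c ∈ J) ∧ x * π χ = v} ⟨v, [], by simp, by simp⟩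
  have hx : cs.IsMinimalCosetRep J x := fun χ' hχ' => not_lt.mp <| hmin _
    ⟨χ'.reverse ++ χ, fun c hc => (List.mem_append.mp hc).elim (hχ' c ∘ List.mem_reverse.mp)
      (hχ c), by simp [wordProd_append, mul_assoc, hxχ]⟩
  obtain ⟨a, b, m, hab, hπ⟩ := cs.exists_wordProd_alternatingWord_eq hχ
  rcases hab with ⟨rfl, rfl⟩ | ⟨rfl, rfl⟩
  · exact cs.not_isRightDescent_wordProd_alternatingWord hM hij m
      (hπ ▸ cs.isRightDescent_of_isMinimalCosetRep hM hx hχ (Or.inl rfl) (hxχ ▸ hi))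
  · exact cs.not_isRightDescent_wordProd_alternatingWord hM (by rw [M.symmetric, hij]) m
      (hπ ▸ cs.isRightDescent_of_isMinimalCosetRep hM hx hχ (Or.inr rfl) (hxχ ▸ hj))

include hM in
theorem eq_two_of_isRightDescent {s t : B} (hst : s ≠ t) {v : W} (hs : cs.IsRightDescent v s)
    (ht : cs.IsRightDescent v t) : M s t = 2 :=
  (hM s t hst).resolve_right fun h => cs.not_isRightDescent_of_eq_zero hM h hs ht

include hM in
theorem isRightDescent_mul_simple_of_adj {u w : B} (huw : M.coxeterGraph.Adj u w) {x : W}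
    (hx : cs.IsRightDescent x u) : cs.IsRightDescent (x * σ w) w := by
  rw [isRightDescent_iff_not_isRightDescent_mul, simple_mul_simple_cancel_right]
  exact cs.not_isRightDescent_of_eq_zero hM (hM.eq_zero_of_adj huw) hx

theorem wordProd_support_tail_cons {u w v : B} (huw : M.coxeterGraph.Adj u w)
    (q : M.coxeterGraph.Walk w v) :
    π (SimpleGraph.Walk.cons huw q).support.tail = σ w * π q.support.tail := by
  rw [SimpleGraph.Walk.support_cons, List.tail_cons, ← q.cons_tail_support, wordProd_cons,
    List.tail_cons]

include hM in
theorem isRightDescent_mul_wordProd_walk {u v : B} (p : M.coxeterGraph.Walk u v) {x : W}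
    (hx : cs.IsRightDescent x u) : cs.IsRightDescent (x * π p.support.tail) v := by
  induction p generalizing x with
  | nil => simpa using hx
  | cons huw q ih =>
    rw [wordProd_support_tail_cons, ← mul_assoc]
    exact ih (cs.isRightDescent_mul_simple_of_adj hM huw hx)

include hM in
theorem isRightDescent_of_isRightDescent_mul_wordProd_walk {u v : B}
    (p : M.coxeterGraph.Walk u v) {x : W} (hx : cs.IsRightDescent x u) {s : B} (hsv : s ≠ v)
    (hs : cs.IsRightDescent (x * π p.support.tail) s) :
    cs.IsRightDescent x s ∧ ∀ d ∈ p.support, M s d = 2 := by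
  induction p generalizing x with
  | nil =>
    rw [SimpleGraph.Walk.support_nil, List.tail_cons, wordProd_nil, mul_one] at hs
    exact ⟨hs, by simpa using cs.eq_two_of_isRightDescent hM hsv hs hx⟩
  | @cons u w v huw q ih =>
    rw [wordProd_support_tail_cons, ← mul_assoc] at hs
    obtain ⟨hs', hq⟩ := ih (cs.isRightDescent_mul_simple_of_adj hM huw hx) hsv hs
    have hsw : M s w = 2 := hq w q.start_mem_support
    have hs : cs.IsRightDescent x s :=
      (cs.isRightDescent_mul_simple_iff hM (fun h => by simp [h] at hsw) hsw).mp hs'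
    have hsu : s ≠ u := fun h => (CoxeterMatrix.coxeterGraph_adj.mp huw).2 (h ▸ hsw)
    refine ⟨hs, fun d hd => ?_⟩
    rcases List.mem_cons.mp hd with rfl | hd
    exacts [cs.eq_two_of_isRightDescent hM hsu hs hx, hq d hd]

include hM in
theorem setOf_isRightDescent_mul_wordProd_walk {u : B} (p : M.coxeterGraph.Walk u u)
    (hp : ∀ s, s ∈ p.support) {x : W} (hx : cs.IsRightDescent x u) :
    {s | cs.IsRightDescent (x * π p.support.tail) s} = {u} := by
  refine Set.eq_singleton_iff_unique_mem.mpr ⟨cs.isRightDescent_mul_wordProd_walk hM p hx,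
    fun s hs => by_contra fun hsu => ?_⟩
  simpa using (cs.isRightDescent_of_isRightDescent_mul_wordProd_walk hM p hx hsu hs).2 s (hp s)

theorem exists_isRightDescent_length_inv_mul_le_one (w : W) (i : B) :
    ∃ w', cs.IsRightDescent w' i ∧ ℓ (w⁻¹ * w') ≤ 1 := by
  by_cases h : cs.IsRightDescent w i
  · exact ⟨w, h, by simp⟩
  · refine ⟨w * σ i, cs.isRightDescent_iff_not_isRightDescent_mul.mpr ?_, by simp⟩
    rwa [simple_mul_simple_cancel_right]

end

end CoxeterSystem

/-- **Key Lemma.** Let `(W,S)` be a right-angled Coxeter system such that `W`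
is infinite. If `(W,S)` is irreducible, then there exists `s₀ ∈ S` such that
`W^{{s₀}} = {w ∈ W : S(w) = {s₀}}` is quasi-dense in `W` with respect to the word metric. -/
theorem key_lemma_quasiDense_of_irreducible {B W : Type*} [Finite B] [Group W] [Infinite W]
    {M : CoxeterMatrix B} (cs : CoxeterSystem M W)
    (hra : ∀ s t : B, s ≠ t → M s t = 2 ∨ M s t = 0)
    (hirr : ¬ ∃ S₁ S₂ : Set B, S₁ ∪ S₂ = Set.univ ∧ Disjoint S₁ S₂ ∧
        S₁.Nonempty ∧ S₂.Nonempty ∧ ∀ s ∈ S₁, ∀ t ∈ S₂, M s t = 2) :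
    ∃ s₀ : B, ∃ N : ℕ, 0 < N ∧ ∀ w : W, ∃ v : W,
      {s : B | cs.IsRightDescent v s} = {s₀} ∧ cs.length (w⁻¹ * v) ≤ N := by
  obtain ⟨x, hx⟩ := exists_ne (1 : W)
  obtain ⟨s₀, -⟩ := cs.exists_rightDescent_of_ne_one hx
  obtain ⟨p, hp⟩ := (CoxeterMatrix.IsIrreducible.preconnected_coxeterGraph hirr)
    |>.exists_walk_forall_mem_support s₀
  refine ⟨s₀, p.length + 1, p.length.succ_pos, fun w => ?_⟩
  obtain ⟨w', hw', hww'⟩ := cs.exists_isRightDescent_length_inv_mul_le_one w s₀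
  refine ⟨w' * cs.wordProd p.support.tail,
    cs.setOf_isRightDescent_mul_wordProd_walk hra p hp hw', ?_⟩
  calc cs.length (w⁻¹ * (w' * cs.wordProd p.support.tail))
      ≤ cs.length (w⁻¹ * w') + cs.length (cs.wordProd p.support.tail) := by
        rw [← mul_assoc]; exact cs.length_mul_le _ _
    _ ≤ 1 + p.support.tail.length := add_le_add hww' (cs.length_wordProd_le _)
    _ = p.length + 1 := by rw [List.length_tail, p.length_support]; omega
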